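/- Let ψ : R^3 → R be the quadratic form ψ(x) = x_1^2 + x_2^2 − x_3^2 (a Morse singularity of index 1). The set S = H^+ ∪ H^- ∪ R^+ ∪ R^- ∪ Q — where H^± are the discs {ψ = −1, 0 ≤ ±x_3 ≤ 2}, R^± are the rings swept out by gradient trajectories of ψ from ∂H^± to the cylinder L = {ψ = 1}, and Q is the closure of the bounded component of L \ (R^+ ∪ R^-) — is homeomorphic to the 2-sphere, and the closure of the bounded component of R^3 \ S is homeomorphic to the 3-disc. -/

import Mathlib

noncomputable section

/-- The standard index-1 Morse quadratic form `ψ(x) = x₁² + x₂² − x₃²` on ℝ³. -/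
def psi (x : EuclideanSpace ℝ (Fin 3)) : ℝ := x 0 ^ 2 + x 1 ^ 2 - x 2 ^ 2

/-- The gradient of `ψ`: `grad ψ (y) = (2y₁, 2y₂, −2y₃)`. -/
def gradPsi (y : EuclideanSpace ℝ (Fin 3)) : EuclideanSpace ℝ (Fin 3) :=
  (WithLp.equiv 2 (Fin 3 → ℝ)).symm ![2 * y 0, 2 * y 1, -2 * y 2]

/-- The top bay `H⁺ = {ψ = −1, 0 ≤ x₃ ≤ 2}`. -/
def Hplus : Set (EuclideanSpace ℝ (Fin 3)) :=
  {x | psi x = -1 ∧ 0 ≤ x 2 ∧ x 2 ≤ 2}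

/-- The bottom bay `H⁻ = {ψ = −1, −2 ≤ x₃ ≤ 0}`. -/
def Hminus : Set (EuclideanSpace ℝ (Fin 3)) :=
  {x | psi x = -1 ∧ -2 ≤ x 2 ∧ x 2 ≤ 0}

/-- The boundary circle of the bay `H⁺`. -/
def bdHplus : Set (EuclideanSpace ℝ (Fin 3)) := {x | psi x = -1 ∧ x 2 = 2}

/-- The boundary circle of the bay `H⁻`. -/
def bdHminus : Set (EuclideanSpace ℝ (Fin 3)) := {x | psi x = -1 ∧ x 2 = -2}

/-- The cylindrical surface `L = {ψ = 1}`. -/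
def Lcyl : Set (EuclideanSpace ℝ (Fin 3)) := {x | psi x = 1}

/-- The ring swept out by the gradient trajectories of `ψ` (solutions of
`y' = grad ψ (y)`) from the circle `K` to the cylinder `L`. -/
def ringFrom (K : Set (EuclideanSpace ℝ (Fin 3))) : Set (EuclideanSpace ℝ (Fin 3)) :=
  {x | ∃ μ : ℝ, 0 < μ ∧ ∃ c : ℝ → EuclideanSpace ℝ (Fin 3),
    (∀ t ∈ Set.Icc (0 : ℝ) μ, HasDerivAt c (gradPsi (c t)) t) ∧
    c 0 ∈ K ∧ c μ ∈ Lcyl ∧ x ∈ c '' Set.Icc (0 : ℝ) μ}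

/-- The top ring `R⁺`. -/
def Rplus : Set (EuclideanSpace ℝ (Fin 3)) := ringFrom bdHplus

/-- The bottom ring `R⁻`. -/
def Rminus : Set (EuclideanSpace ℝ (Fin 3)) := ringFrom bdHminus

/-- The cloak `Q`: the closure of the bounded component of `L \ (R⁺ ∪ R⁻)`. -/
def Qcloak : Set (EuclideanSpace ℝ (Fin 3)) :=
  closure {y | y ∈ Lcyl \ (Rplus ∪ Rminus) ∧
    Bornology.IsBounded (connectedComponentIn (Lcyl \ (Rplus ∪ Rminus)) y)}

/-- The surface `S = H⁺ ∪ H⁻ ∪ R⁺ ∪ R⁻ ∪ Q`. -/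
def Ssurf : Set (EuclideanSpace ℝ (Fin 3)) := Hplus ∪ Hminus ∪ Rplus ∪ Rminus ∪ Qcloak

/-!
In the coordinates `u = x₁² + x₂²`, `v = x₃²` the gradient flow of `ψ` is
`(u, v) ↦ (e^{4t} u, e^{-4t} v)`, so its trajectories lie on the curves `uv = const` and `ψ`
increases along them. Hence the rings are `R± = {uv = 12, |ψ| ≤ 1, ±x₃ > 0}`, the bays are
`H± = {ψ = -1, uv ≤ 12, ±x₃ ≥ 0}` and the cloak is `Q = {ψ = 1, uv ≤ 12}`, so that `S` is the
unit level set of `max (ψ², uv / 12)`. This function is continuous, homogeneous of degree four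
and positive off the origin, so its fourth root `N` is a gauge, and the radial rescaling
`x ↦ (N x / ‖x‖) • x` is a homeomorphism of `ℝ³` carrying `S = {N = 1}` onto the unit sphere and
the closure `{N ≤ 1}` of the bounded component `{N < 1}` of `ℝ³ \ S` onto the unit ball.
-/

open Set Real Filter Topology Bornology Metric

section LevelSets

variable {X : Type*} [TopologicalSpace X]

theorem setOf_isBounded_connectedComponentIn_diff_preimage [Bornology X] {A : Set X}
    {f : X → ℝ} {a : ℝ} (hf : Continuous f) (hlt : IsBounded {x ∈ A | f x < a})
    (hgt : ∀ x ∈ A, a < f x →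
      ∃ C, IsPreconnected C ∧ x ∈ C ∧ C ⊆ A ∧ (∀ y ∈ C, a < f y) ∧ ¬IsBounded C) :
    {x | x ∈ A \ f ⁻¹' {a} ∧ IsBounded (connectedComponentIn (A \ f ⁻¹' {a}) x)} =
      {x ∈ A | f x < a} := by
  ext x
  constructor
  · rintro ⟨⟨hxA, hxa⟩, hbdd⟩
    refine ⟨hxA, (lt_or_gt_of_ne hxa).resolve_right fun hax => ?_⟩
    obtain ⟨C, hC, hxC, hCA, hCf, hCunbdd⟩ := hgt x hxA hax
    exact hCunbdd <| hbdd.subset <|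
      hC.subset_connectedComponentIn hxC fun y hy => ⟨hCA hy, (hCf y hy).ne'⟩
  · rintro ⟨hxA, hxa⟩
    have hxU : x ∈ A \ f ⁻¹' {a} := ⟨hxA, hxa.ne⟩
    have hcomp : connectedComponentIn (A \ f ⁻¹' {a}) x ⊆ {y | f y < a} :=
      isPreconnected_connectedComponentIn.subset_left_of_subset_union
        (isOpen_lt hf continuous_const) (isOpen_lt continuous_const hf)
        (disjoint_left.2 fun _ (h₁ : f _ < a) (h₂ : a < f _) => lt_asymm h₁ h₂)
        (fun y hy => lt_or_gt_of_ne (connectedComponentIn_subset _ _ hy).2)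
        ⟨x, mem_connectedComponentIn hxU, hxa⟩
    exact ⟨hxU, hlt.subset fun y hy => ⟨(connectedComponentIn_subset _ _ hy).1, hcomp hy⟩⟩

theorem mem_closure_of_continuousAt_one {γ : ℝ → X} {s : Set X} (hγ : ContinuousAt γ 1)
    (hs : ∀ t ∈ Ioo (0 : ℝ) 1, γ t ∈ s) : γ 1 ∈ closure s :=
  mem_closure_of_tendsto (hγ.tendsto.mono_left nhdsWithin_le_nhds)
    (mem_of_superset (Ioo_mem_nhdsLT zero_lt_one) hs)

end LevelSets

theorem not_isBounded_image_Ici_of_tendsto_norm {E : Type*} [SeminormedAddGroup E]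
    {γ : ℝ → E} (hγ : Tendsto (fun t => ‖γ t‖) atTop atTop) (a : ℝ) :
    ¬IsBounded (γ '' Ici a) := by
  intro hbdd
  obtain ⟨C, hC⟩ := isBounded_iff_forall_norm_le.1 hbdd
  obtain ⟨t, hCt, hat⟩ := ((hγ.eventually_gt_atTop C).and (eventually_ge_atTop a)).exists
  exact (hC _ (mem_image_of_mem γ hat)).not_gt hCt

section RadialGauge

variable {E : Type*} [NormedAddCommGroup E] [NormedSpace ℝ E]

theorem continuous_smul_self_of_abs_le {g : E → ℝ} (hg : ∀ x ≠ 0, ContinuousAt g x)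
    {C : ℝ} (hC : ∀ x ≠ 0, |g x| ≤ C) : Continuous fun x => g x • x := by
  refine continuous_iff_continuousAt.2 fun x => ?_
  rcases eq_or_ne x 0 with rfl | hx
  · have hlim : Tendsto (fun y : E => C * ‖y‖) (𝓝 0) (𝓝 0) := by
      simpa using (continuous_norm.tendsto (0 : E)).const_mul C
    have hle (y : E) : ‖g y • y‖ ≤ C * ‖y‖ := by
      rcases eq_or_ne y 0 with rfl | hy
      · simp
      · rw [norm_smul, Real.norm_eq_abs]
        exact mul_le_mul_of_nonneg_right (hC y hy) (norm_nonneg y)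
    simpa [ContinuousAt] using squeeze_zero_norm hle hlim
  · exact (hg x hx).smul continuousAt_id

structure IsRadialGauge (N : E → ℝ) : Prop where
  continuous : Continuous N
  map_smul_of_nonneg {c : ℝ} (hc : 0 ≤ c) (x : E) : N (c • x) = c * N x
  pos_of_ne_zero {x : E} (hx : x ≠ 0) : 0 < N x

namespace IsRadialGauge

variable {N : E → ℝ}

theorem map_zero (hN : IsRadialGauge N) : N 0 = 0 := by
  simpa using hN.map_smul_of_nonneg le_rfl (0 : E)

theorem nonneg (hN : IsRadialGauge N) (x : E) : 0 ≤ N x := by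
  rcases eq_or_ne x 0 with rfl | hx
  · exact hN.map_zero.ge
  · exact (hN.pos_of_ne_zero hx).le

theorem eq_norm_mul_inv_norm_smul (hN : IsRadialGauge N) (x : E) :
    N x = ‖x‖ * N (‖x‖⁻¹ • x) := by
  rcases eq_or_ne x 0 with rfl | hx
  · simp [hN.map_zero]
  · rw [hN.map_smul_of_nonneg (by positivity), ← mul_assoc,
      mul_inv_cancel₀ (norm_ne_zero_iff.2 hx), one_mul]

theorem closure_setOf_lt_one (hN : IsRadialGauge N) :
    closure {x | N x < 1} = {x | N x ≤ 1} := by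
  refine (closure_lt_subset_le hN.continuous continuous_const).antisymm fun x hx => ?_
  simpa using mem_closure_of_continuousAt_one (s := {x | N x < 1})
    (γ := fun t : ℝ => t • x) (continuous_id.smul continuous_const).continuousAt
    fun t ht => by
      rw [mem_ofPred_eq, hN.map_smul_of_nonneg ht.1.le]
      exact (mul_le_of_le_one_right ht.1.le hx).trans_lt ht.2

variable [ProperSpace E]

theorem exists_pos_mul_norm_le (hN : IsRadialGauge N) : ∃ c > 0, ∀ x, c * ‖x‖ ≤ N x := by
  obtain ⟨c, hc, hcN⟩ := (isCompact_sphere (0 : E) 1).exists_forall_le'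
    hN.continuous.continuousOn fun x hx =>
      hN.pos_of_ne_zero (ne_zero_of_mem_unit_sphere ⟨x, hx⟩)
  refine ⟨c, hc, fun x => ?_⟩
  rcases eq_or_ne x 0 with rfl | hx
  · simp [hN.map_zero]
  · rw [hN.eq_norm_mul_inv_norm_smul x, mul_comm c]
    exact mul_le_mul_of_nonneg_left
      (hcN _ (mem_sphere_zero_iff_norm.2 (norm_smul_inv_norm hx))) (norm_nonneg x)

theorem exists_le_mul_norm (hN : IsRadialGauge N) : ∃ C, ∀ x, N x ≤ C * ‖x‖ := by
  obtain ⟨C, hC⟩ := (isCompact_sphere (0 : E) 1).exists_bound_of_continuousOn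
    hN.continuous.continuousOn
  refine ⟨C, fun x => ?_⟩
  rcases eq_or_ne x 0 with rfl | hx
  · simp [hN.map_zero]
  · rw [hN.eq_norm_mul_inv_norm_smul x, mul_comm C]
    exact mul_le_mul_of_nonneg_left ((Real.le_norm_self _).trans
      (hC _ (mem_sphere_zero_iff_norm.2 (norm_smul_inv_norm hx)))) (norm_nonneg x)

def radialHomeomorph (hN : IsRadialGauge N) : E ≃ₜ E where
  toFun x := (N x / ‖x‖) • x
  invFun y := (‖y‖ / N y) • y
  left_inv x := by
    rcases eq_or_ne x 0 with rfl | hx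
    · simp
    have hNx := hN.pos_of_ne_zero hx
    have hc := div_pos hNx (norm_pos_iff.2 hx)
    simp only [norm_smul, Real.norm_eq_abs, abs_of_pos hc, hN.map_smul_of_nonneg hc.le, smul_smul]
    convert one_smul ℝ x using 2
    field_simp
  right_inv y := by
    rcases eq_or_ne y 0 with rfl | hy
    · simp
    have hNy := hN.pos_of_ne_zero hy
    have hc := div_pos (norm_pos_iff.2 hy) hNy
    simp only [norm_smul, Real.norm_eq_abs, abs_of_pos hc, hN.map_smul_of_nonneg hc.le, smul_smul]
    convert one_smul ℝ y using 2
    field_simp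
  continuous_toFun := by
    obtain ⟨C, hC⟩ := hN.exists_le_mul_norm
    refine continuous_smul_self_of_abs_le (fun x hx => hN.continuous.continuousAt.div
      continuous_norm.continuousAt (norm_ne_zero_iff.2 hx)) (C := C) fun x hx => ?_
    rw [abs_div, abs_norm, abs_of_nonneg (hN.nonneg x), div_le_iff₀ (norm_pos_iff.2 hx)]
    exact hC x
  continuous_invFun := by
    obtain ⟨c, hc, hcN⟩ := hN.exists_pos_mul_norm_le
    refine continuous_smul_self_of_abs_le (fun y hy => continuous_norm.continuousAt.div
      hN.continuous.continuousAt (hN.pos_of_ne_zero hy).ne') (C := c⁻¹) fun y hy => ?_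
    rw [abs_div, abs_norm, abs_of_nonneg (hN.nonneg y), div_le_iff₀ (hN.pos_of_ne_zero hy),
      le_inv_mul_iff₀ hc]
    exact hcN y

theorem norm_radialHomeomorph (hN : IsRadialGauge N) (x : E) :
    ‖hN.radialHomeomorph x‖ = N x := by
  rcases eq_or_ne x 0 with rfl | hx
  · simp [radialHomeomorph, hN.map_zero]
  · have hx' := norm_pos_iff.2 hx
    simp only [radialHomeomorph, Homeomorph.homeomorph_mk_coe, Equiv.coe_fn_mk, norm_smul,
      Real.norm_eq_abs, abs_div, abs_norm, abs_of_nonneg (hN.nonneg x)]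
    field_simp

def homeomorphSphere (hN : IsRadialGauge N) : {x | N x = 1} ≃ₜ sphere (0 : E) 1 :=
  hN.radialHomeomorph.subtype fun x => by simp [hN.norm_radialHomeomorph]

def homeomorphClosedBall (hN : IsRadialGauge N) : {x | N x ≤ 1} ≃ₜ closedBall (0 : E) 1 :=
  hN.radialHomeomorph.subtype fun x => by simp [hN.norm_radialHomeomorph]

theorem setOf_isBounded_connectedComponentIn_compl (hN : IsRadialGauge N) :
    {x | x ∉ {y | N y = 1} ∧ IsBounded (connectedComponentIn {y | N y = 1}ᶜ x)} =
      {x | N x < 1} := by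
  have hbdd : IsBounded {x ∈ univ | N x < 1} := by
    obtain ⟨c, hc, hcN⟩ := hN.exists_pos_mul_norm_le
    refine isBounded_iff_forall_norm_le.2 ⟨c⁻¹, fun x hx => ?_⟩
    rw [← mul_one c⁻¹, le_inv_mul_iff₀ hc]
    exact (hcN x).trans hx.2.le
  have hray : ∀ x ∈ univ, 1 < N x → ∃ C, IsPreconnected C ∧ x ∈ C ∧ C ⊆ univ ∧
      (∀ y ∈ C, 1 < N y) ∧ ¬IsBounded C := by
    intro x _ hx
    have hx₀ : x ≠ 0 := by rintro rfl; linarith [hN.map_zero]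
    refine ⟨(· • x) '' Ici 1,
      isPreconnected_Ici.image _ (continuous_id.smul continuous_const).continuousOn,
      ⟨1, self_mem_Ici, one_smul ℝ x⟩, subset_univ _, ?_, ?_⟩
    · rintro _ ⟨t, ht, rfl⟩
      rw [hN.map_smul_of_nonneg (zero_le_one.trans ht)]
      nlinarith [show (1 : ℝ) ≤ t from ht]
    · refine not_isBounded_image_Ici_of_tendsto_norm ?_ 1
      simp only [norm_smul, Real.norm_eq_abs]
      exact tendsto_abs_atTop_atTop.atTop_mul_const (norm_pos_iff.2 hx₀)
  rw [compl_eq_univ_sdiff]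
  convert setOf_isBounded_connectedComponentIn_diff_preimage hN.continuous hbdd hray using 2 <;>
    simp [preimage]

end IsRadialGauge

end RadialGauge

local notation "E3" => EuclideanSpace ℝ (Fin 3)

def horizSq (x : E3) : ℝ := x 0 ^ 2 + x 1 ^ 2

def vertSq (x : E3) : ℝ := x 2 ^ 2

theorem psi_eq_horizSq_sub_vertSq (x : E3) : psi x = horizSq x - vertSq x := rfl

theorem horizSq_nonneg (x : E3) : 0 ≤ horizSq x := by unfold horizSq; positivity

theorem vertSq_nonneg (x : E3) : 0 ≤ vertSq x := by unfold vertSq; positivity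

theorem norm_sq_eq_horizSq_add_vertSq (x : E3) : ‖x‖ ^ 2 = horizSq x + vertSq x := by
  simp [EuclideanSpace.norm_sq_eq, Fin.sum_univ_three, horizSq, vertSq, add_assoc]

theorem continuous_psi : Continuous psi := by unfold psi; fun_prop

theorem continuous_horizSq : Continuous horizSq := by unfold horizSq; fun_prop

theorem continuous_vertSq : Continuous vertSq := by unfold vertSq; fun_prop

theorem horizSq_smul (c : ℝ) (x : E3) : horizSq (c • x) = c ^ 2 * horizSq x := by
  simp only [horizSq, PiLp.smul_apply, smul_eq_mul]; ring

theorem vertSq_smul (c : ℝ) (x : E3) : vertSq (c • x) = c ^ 2 * vertSq x := by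
  simp only [vertSq, PiLp.smul_apply, smul_eq_mul]; ring

theorem horizSq_eq_of_mem_Lcyl {y : E3} (hy : y ∈ Lcyl) : horizSq y = 1 + vertSq y := by
  have : psi y = 1 := hy
  rw [psi_eq_horizSq_sub_vertSq] at this
  linarith

def surfaceQuartic (x : E3) : ℝ := max (psi x ^ 2) (horizSq x * vertSq x / 12)

def surfaceGauge (x : E3) : ℝ := √(√(surfaceQuartic x))

theorem surfaceQuartic_smul (c : ℝ) (x : E3) :
    surfaceQuartic (c • x) = c ^ 4 * surfaceQuartic x := by
  simp only [surfaceQuartic, psi_eq_horizSq_sub_vertSq, horizSq_smul, vertSq_smul]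
  rw [mul_max_of_nonneg _ _ (by positivity)]
  congr 1 <;> ring

theorem surfaceQuartic_pos {x : E3} (hx : x ≠ 0) : 0 < surfaceQuartic x := by
  have hsum : 0 < horizSq x + vertSq x := by
    rw [← norm_sq_eq_horizSq_add_vertSq]; positivity
  rcases eq_or_ne (psi x) 0 with hpsi | hpsi
  · have hu : horizSq x = vertSq x := by rw [psi_eq_horizSq_sub_vertSq] at hpsi; linarith
    have : 0 < horizSq x * vertSq x / 12 := by rw [hu]; nlinarith
    exact this.trans_le (le_max_right _ _)
  · exact (show 0 < psi x ^ 2 by positivity).trans_le (le_max_left _ _)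

theorem isRadialGauge_surfaceGauge : IsRadialGauge surfaceGauge where
  continuous := by unfold surfaceGauge surfaceQuartic psi horizSq vertSq; fun_prop
  map_smul_of_nonneg {c} hc x := by
    rw [surfaceGauge, surfaceQuartic_smul, show c ^ 4 = (c ^ 2) ^ 2 by ring,
      Real.sqrt_mul (by positivity), Real.sqrt_sq (by positivity),
      Real.sqrt_mul (by positivity), Real.sqrt_sq hc, surfaceGauge]
  pos_of_ne_zero hx := Real.sqrt_pos.2 (Real.sqrt_pos.2 (surfaceQuartic_pos hx))

theorem surfaceGauge_eq_one_iff {x : E3} : surfaceGauge x = 1 ↔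
    (psi x ^ 2 = 1 ∧ horizSq x * vertSq x ≤ 12) ∨
      (horizSq x * vertSq x = 12 ∧ psi x ^ 2 ≤ 1) := by
  rw [surfaceGauge, Real.sqrt_eq_one, Real.sqrt_eq_one, surfaceQuartic, max_eq_iff]
  constructor <;> rintro (⟨h₁, h₂⟩ | ⟨h₁, h₂⟩)
  exacts [Or.inl ⟨h₁, by linarith⟩, Or.inr ⟨by linarith, by linarith⟩,
    Or.inl ⟨h₁, by linarith⟩, Or.inr ⟨by linarith, by linarith⟩]

def gradFlow (t : ℝ) (y : E3) : E3 :=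
  exp (2 * t) • !₂[y 0, y 1, 0] + exp (-(2 * t)) • !₂[0, 0, y 2]

theorem gradFlow_apply_two (t : ℝ) (y : E3) : gradFlow t y 2 = (exp (2 * t))⁻¹ * y 2 := by
  simp [gradFlow, exp_neg]

theorem horizSq_gradFlow (t : ℝ) (y : E3) :
    horizSq (gradFlow t y) = exp (2 * t) ^ 2 * horizSq y := by
  simp [horizSq, gradFlow]; ring

theorem vertSq_gradFlow (t : ℝ) (y : E3) :
    vertSq (gradFlow t y) = (exp (2 * t) ^ 2)⁻¹ * vertSq y := by
  rw [vertSq, vertSq, gradFlow_apply_two]; ring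

theorem horizSq_mul_vertSq_gradFlow (t : ℝ) (y : E3) :
    horizSq (gradFlow t y) * vertSq (gradFlow t y) = horizSq y * vertSq y := by
  rw [horizSq_gradFlow, vertSq_gradFlow]
  field_simp

theorem gradFlow_zero (y : E3) : gradFlow 0 y = y := by
  ext i; fin_cases i <;> simp [gradFlow]

theorem gradFlow_gradFlow (s t : ℝ) (y : E3) :
    gradFlow s (gradFlow t y) = gradFlow (s + t) y := by
  ext i; fin_cases i <;> simp [gradFlow, mul_add, exp_add] <;> ring

theorem monotone_psi_gradFlow (y : E3) : Monotone fun t => psi (gradFlow t y) := by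
  intro s t hst
  simp only [psi_eq_horizSq_sub_vertSq, horizSq_gradFlow, vertSq_gradFlow]
  have := horizSq_nonneg y
  have := vertSq_nonneg y
  gcongr

theorem hasDerivAt_gradFlow (t : ℝ) (y : E3) :
    HasDerivAt (fun s => gradFlow s y) (gradPsi (gradFlow t y)) t := by
  have h := (((hasDerivAt_id t).const_mul 2).exp.smul_const (!₂[y 0, y 1, 0] : E3)).add
    (((hasDerivAt_id t).const_mul 2).neg.exp.smul_const (!₂[0, 0, y 2] : E3))
  refine h.congr_deriv ?_
  ext i; fin_cases i <;> simp [gradFlow, gradPsi] <;> ring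

theorem lipschitzWith_gradPsi : LipschitzWith 2 gradPsi := by
  refine LipschitzWith.of_dist_le_mul fun y z => le_of_eq ?_
  rw [dist_eq_norm, dist_eq_norm, NNReal.coe_ofNat]
  refine (sq_eq_sq₀ (norm_nonneg _) (by positivity)).1 ?_
  rw [mul_pow, EuclideanSpace.norm_sq_eq, EuclideanSpace.norm_sq_eq]
  simp [Fin.sum_univ_three, gradPsi]
  ring

theorem eqOn_gradFlow_of_hasDerivAt {c : ℝ → E3} {μ : ℝ}
    (hc : ∀ t ∈ Icc 0 μ, HasDerivAt c (gradPsi (c t)) t) :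
    EqOn c (fun t => gradFlow t (c 0)) (Icc 0 μ) :=
  ODE_solution_unique (v := fun _ => gradPsi) (fun _ => lipschitzWith_gradPsi)
    (continuousOn_of_forall_continuousAt fun t ht => (hc t ht).continuousAt)
    (fun t ht => (hc t (Ico_subset_Icc_self ht)).hasDerivWithinAt)
    (continuousOn_of_forall_continuousAt fun t _ => (hasDerivAt_gradFlow t _).continuousAt)
    (fun t _ => (hasDerivAt_gradFlow t _).hasDerivWithinAt) (gradFlow_zero _).symm

theorem ringFrom_eq_setOf_gradFlow (K : Set E3) :
    ringFrom K = {x | ∃ μ > 0, ∃ k ∈ K, gradFlow μ k ∈ Lcyl ∧ x ∈ (gradFlow · k) '' Icc 0 μ} := by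
  ext x
  constructor
  · rintro ⟨μ, hμ, c, hc, hc₀, hcμ, hx⟩
    have hcflow := eqOn_gradFlow_of_hasDerivAt hc
    refine ⟨μ, hμ, c 0, hc₀, ?_, ?_⟩
    · rw [← show c μ = gradFlow μ (c 0) from hcflow (right_mem_Icc.2 hμ.le)]
      exact hcμ
    · rwa [← hcflow.image_eq]
  · rintro ⟨μ, hμ, k, hk, hkμ, hx⟩
    exact ⟨μ, hμ, (gradFlow · k), fun t _ => hasDerivAt_gradFlow t k,
      by simpa only [gradFlow_zero], hkμ, hx⟩

theorem ringFrom_circle_subset {z₀ : ℝ} (hz₀ : z₀ ^ 2 = 4) :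
    ringFrom {x | psi x = -1 ∧ x 2 = z₀} ⊆
      {x | horizSq x * vertSq x = 12 ∧ psi x ^ 2 ≤ 1 ∧ 0 < z₀ * x 2} := by
  rw [ringFrom_eq_setOf_gradFlow]
  rintro _ ⟨μ, hμ, k, ⟨hk, hk₂⟩, hkμ, t, ht, rfl⟩
  have hvk : vertSq k = 4 := by rw [vertSq, hk₂, hz₀]
  have huk : horizSq k = 3 := by rw [psi_eq_horizSq_sub_vertSq, hvk] at hk; linarith
  have hlow : -1 ≤ psi (gradFlow t k) := by
    simpa only [gradFlow_zero, hk] using monotone_psi_gradFlow k ht.1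
  have hup : psi (gradFlow t k) ≤ 1 := (monotone_psi_gradFlow k ht.2).trans_eq hkμ
  refine ⟨by rw [horizSq_mul_vertSq_gradFlow, huk, hvk]; norm_num, by nlinarith, ?_⟩
  rw [gradFlow_apply_two, hk₂, mul_left_comm, ← sq, hz₀]
  positivity

theorem subset_ringFrom_circle {z₀ : ℝ} (hz₀ : z₀ ^ 2 = 4) :
    {x | horizSq x * vertSq x = 12 ∧ psi x ^ 2 ≤ 1 ∧ 0 < z₀ * x 2} ⊆
      ringFrom {x | psi x = -1 ∧ x 2 = z₀} := by
  rw [ringFrom_eq_setOf_gradFlow]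
  rintro x ⟨huv, hpsi, hz⟩
  obtain ⟨hpsi₁, hpsi₂⟩ := abs_le.1 ((sq_le_one_iff_abs_le_one _).1 hpsi)
  rw [psi_eq_horizSq_sub_vertSq] at hpsi₁ hpsi₂
  have hv₄ : vertSq x ≤ 4 := by nlinarith [horizSq_nonneg x]
  have hv₃ : 3 ≤ vertSq x := by nlinarith [horizSq_nonneg x]
  have hx₂ : x 2 ≠ 0 := by rintro h; simp [h] at hz
  -- `k = gradFlow (-τ) x` lies on the circle once `exp (2τ) = z₀ / x₃`, and `exp (4μ) = 4 / 3`
  -- carries `k` to `L`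
  set r := z₀ / x 2 with hr
  have hr_pos : 0 < r := by
    rw [hr, ← mul_div_mul_right z₀ _ hx₂]; exact div_pos hz (mul_self_pos.2 hx₂)
  have hr_sq : r ^ 2 * vertSq x = 4 := by
    rw [hr, vertSq, div_pow, div_mul_cancel₀ _ (by positivity), hz₀]
  obtain ⟨τ, hτ⟩ : ∃ τ, exp (2 * τ) = r :=
    ⟨log r / 2, by rw [mul_div_cancel₀ _ two_ne_zero, exp_log hr_pos]⟩
  obtain ⟨μ, hμ⟩ : ∃ μ, exp (2 * μ) ^ 2 = 4 / 3 :=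
    ⟨log (4 / 3) / 4, by
      rw [sq, ← exp_add, show 2 * (log (4 / 3) / 4) + 2 * (log (4 / 3) / 4) = log (4 / 3) by ring,
        exp_log (by norm_num)]⟩
  set k := gradFlow (-τ) x
  have hk₂ : k 2 = z₀ := by
    rw [gradFlow_apply_two, mul_neg, exp_neg, inv_inv, hτ, hr, div_mul_cancel₀ _ hx₂]
  have hvk : vertSq k = 4 := by rw [vertSq, hk₂, hz₀]
  have huk : horizSq k = 3 := by
    have := horizSq_mul_vertSq_gradFlow (-τ) x
    rw [hvk, huv] at this
    linarith
  have hτ₀ : 0 ≤ τ := by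
    have : 1 ≤ exp (2 * τ) := by rw [hτ]; nlinarith
    linarith [one_le_exp_iff.1 this]
  have hτμ : τ ≤ μ := by
    have : exp (2 * τ) ≤ exp (2 * μ) := by rw [hτ]; nlinarith [exp_pos (2 * μ)]
    linarith [exp_le_exp.1 this]
  refine ⟨μ, ?_, k, ⟨?_, hk₂⟩, ?_, τ, ⟨hτ₀, hτμ⟩, ?_⟩
  · have : 1 < exp (2 * μ) := by nlinarith [exp_pos (2 * μ)]
    linarith [one_lt_exp_iff.1 this]
  · rw [psi_eq_horizSq_sub_vertSq, huk, hvk]; norm_num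
  · show psi _ = 1
    rw [psi_eq_horizSq_sub_vertSq, horizSq_gradFlow, vertSq_gradFlow, hμ, huk, hvk]; norm_num
  · simp only [k, gradFlow_gradFlow, add_neg_cancel, gradFlow_zero]

theorem Rplus_union_Rminus :
    Rplus ∪ Rminus = {x | horizSq x * vertSq x = 12 ∧ psi x ^ 2 ≤ 1} := by
  have hring (z₀ : ℝ) (hz₀ : z₀ ^ 2 = 4) :=
    (ringFrom_circle_subset hz₀).antisymm (subset_ringFrom_circle hz₀)
  rw [Rplus, Rminus, bdHplus, bdHminus, hring 2 (by norm_num), hring (-2) (by norm_num)]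
  ext x
  simp only [mem_union, mem_ofPred_eq]
  constructor
  · rintro (⟨h₁, h₂, -⟩ | ⟨h₁, h₂, -⟩) <;> exact ⟨h₁, h₂⟩
  · rintro ⟨h₁, h₂⟩
    have hx₂ : x 2 ≠ 0 := by rintro h; simp [vertSq, h] at h₁
    rcases hx₂.lt_or_gt with h | h
    · exact Or.inr ⟨h₁, h₂, by linarith⟩
    · exact Or.inl ⟨h₁, h₂, by linarith⟩

def meridian (y : E3) (t : ℝ) : E3 :=
  √((1 + t ^ 2 * vertSq y) / (1 + vertSq y)) • !₂[y 0, y 1, 0] + !₂[0, 0, t * y 2]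

theorem continuous_meridian (y : E3) : Continuous (meridian y) := by
  unfold meridian; fun_prop

theorem meridian_one (y : E3) : meridian y 1 = y := by
  have : 0 < 1 + vertSq y := by linarith [vertSq_nonneg y]
  ext i; fin_cases i <;> simp [meridian, div_self this.ne']

theorem vertSq_meridian (y : E3) (t : ℝ) : vertSq (meridian y t) = t ^ 2 * vertSq y := by
  simp [meridian, vertSq]; ring

theorem horizSq_meridian {y : E3} (hy : y ∈ Lcyl) (t : ℝ) :
    horizSq (meridian y t) = 1 + t ^ 2 * vertSq y := by
  have hv := vertSq_nonneg y
  have : horizSq (meridian y t) = (1 + t ^ 2 * vertSq y) / (1 + vertSq y) * horizSq y := by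
    simp [meridian, horizSq, mul_pow, Real.sq_sqrt (by positivity :
      0 ≤ (1 + t ^ 2 * vertSq y) / (1 + vertSq y))]
    ring
  rw [this, horizSq_eq_of_mem_Lcyl hy, div_mul_cancel₀ _ (by positivity)]

theorem meridian_mem_Lcyl {y : E3} (hy : y ∈ Lcyl) (t : ℝ) : meridian y t ∈ Lcyl := by
  show psi _ = 1
  rw [psi_eq_horizSq_sub_vertSq, horizSq_meridian hy, vertSq_meridian]
  ring

theorem horizSq_mul_vertSq_meridian {y : E3} (hy : y ∈ Lcyl) (t : ℝ) :
    horizSq (meridian y t) * vertSq (meridian y t) =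
      (1 + t ^ 2 * vertSq y) * (t ^ 2 * vertSq y) := by
  rw [horizSq_meridian hy, vertSq_meridian]

theorem not_isBounded_meridian_image {y : E3} (hy : y 2 ≠ 0) :
    ¬IsBounded (meridian y '' Ici 1) := by
  refine not_isBounded_image_Ici_of_tendsto_norm (tendsto_atTop_mono (fun t => ?_)
    (tendsto_abs_atTop_atTop.atTop_mul_const (abs_pos.2 hy))) 1
  simpa [meridian, abs_mul] using PiLp.norm_apply_le (meridian y t) 2

theorem Lcyl_diff_rings :
    Lcyl \ (Rplus ∪ Rminus) = Lcyl \ (fun x => horizSq x * vertSq x) ⁻¹' {12} := by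
  rw [Rplus_union_Rminus]
  ext x
  simp only [Set.mem_sdiff, mem_preimage, mem_singleton_iff, mem_ofPred_eq, and_congr_right_iff]
  intro hx
  rw [show psi x = 1 from hx]
  norm_num

theorem isBounded_Lcyl_sublevel : IsBounded {x | x ∈ Lcyl ∧ horizSq x * vertSq x < 12} := by
  refine isBounded_iff_forall_norm_le.2 ⟨3, fun x hx => ?_⟩
  obtain ⟨hx, huv⟩ := hx
  have hu := horizSq_eq_of_mem_Lcyl hx
  have hv := vertSq_nonneg x
  have hv₃ : vertSq x < 3 := by nlinarith
  have hnorm := norm_sq_eq_horizSq_add_vertSq x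
  nlinarith [norm_nonneg x]

theorem boundedComponents_Lcyl_diff_rings :
    {y | y ∈ Lcyl \ (Rplus ∪ Rminus) ∧
      IsBounded (connectedComponentIn (Lcyl \ (Rplus ∪ Rminus)) y)} =
      {x | x ∈ Lcyl ∧ horizSq x * vertSq x < 12} := by
  rw [Lcyl_diff_rings]
  refine setOf_isBounded_connectedComponentIn_diff_preimage
    (continuous_horizSq.mul continuous_vertSq) isBounded_Lcyl_sublevel fun x hx huv => ?_
  have hx₂ : x 2 ≠ 0 := by rintro h; simp [vertSq, h] at huv; linarith
  refine ⟨meridian x '' Ici 1, isPreconnected_Ici.image _ (continuous_meridian x).continuousOn,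
    ⟨1, self_mem_Ici, meridian_one x⟩, image_subset_iff.2 fun t _ => meridian_mem_Lcyl hx t, ?_,
    not_isBounded_meridian_image hx₂⟩
  rintro _ ⟨t, ht, rfl⟩
  have hv := vertSq_nonneg x
  have htv : vertSq x ≤ t ^ 2 * vertSq x := le_mul_of_one_le_left hv (one_le_pow₀ ht)
  rw [horizSq_mul_vertSq_meridian hx]
  rw [horizSq_eq_of_mem_Lcyl hx] at huv
  nlinarith [mul_le_mul htv htv hv (hv.trans htv)]

theorem Qcloak_eq : Qcloak = {x | psi x = 1 ∧ horizSq x * vertSq x ≤ 12} := by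
  rw [Qcloak, boundedComponents_Lcyl_diff_rings]
  refine Subset.antisymm (closure_minimal (fun x hx => ⟨hx.1, hx.2.le⟩) ?_) fun x hx => ?_
  · exact (isClosed_eq continuous_psi continuous_const).inter
      (isClosed_le (continuous_horizSq.mul continuous_vertSq) continuous_const)
  obtain ⟨hx, huv⟩ := hx
  rw [← meridian_one x]
  refine mem_closure_of_continuousAt_one (continuous_meridian x).continuousAt fun t ht => ?_
  refine ⟨meridian_mem_Lcyl hx t, ?_⟩
  rw [horizSq_mul_vertSq_meridian hx]
  rw [horizSq_eq_of_mem_Lcyl hx] at huv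
  rcases (vertSq_nonneg x).eq_or_lt with hv | hv
  · rw [← hv]; norm_num
  · have htv : t ^ 2 * vertSq x < vertSq x :=
      mul_lt_of_lt_one_left hv (pow_lt_one₀ ht.1.le ht.2 two_ne_zero)
    nlinarith [mul_pos (sub_pos.2 htv) (by positivity : 0 < 1 + vertSq x + t ^ 2 * vertSq x)]

theorem Hplus_union_Hminus :
    Hplus ∪ Hminus = {x | psi x = -1 ∧ horizSq x * vertSq x ≤ 12} := by
  ext x
  simp only [Hplus, Hminus, mem_union, mem_ofPred_eq, psi_eq_horizSq_sub_vertSq]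
  have hu := horizSq_nonneg x
  constructor
  · rintro (⟨h, h₀, h₂⟩ | ⟨h, h₀, h₂⟩) <;> refine ⟨h, ?_⟩ <;>
    · have hv : vertSq x ≤ 4 := by rw [vertSq]; nlinarith
      nlinarith
  · rintro ⟨h, huv⟩
    have hv : x 2 ^ 2 ≤ 4 := by rw [← vertSq]; nlinarith
    rcases le_total 0 (x 2) with hx₂ | hx₂
    · exact Or.inl ⟨h, hx₂, by nlinarith⟩
    · exact Or.inr ⟨h, by nlinarith, hx₂⟩

theorem Ssurf_eq : Ssurf = {x | surfaceGauge x = 1} := by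
  rw [Ssurf, union_assoc (Hplus ∪ Hminus), Hplus_union_Hminus, Rplus_union_Rminus, Qcloak_eq]
  ext x
  simp only [mem_union, mem_ofPred_eq, surfaceGauge_eq_one_iff, sq_eq_one_iff]
  tauto

/-- the surface `S = H⁺ ∪ H⁻ ∪ R⁺ ∪ R⁻ ∪ Q` is homeomorphic to the
2-sphere, and the closure of the bounded component of `ℝ³ \ S` is homeomorphic to the
3-disc. -/
theorem canonical_chart_sphere_and_disc :
    Nonempty (↥Ssurf ≃ₜ Metric.sphere (0 : EuclideanSpace ℝ (Fin 3)) 1) ∧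
    Nonempty (↥(closure {x | x ∉ Ssurf ∧
        Bornology.IsBounded (connectedComponentIn Ssurfᶜ x)}) ≃ₜ
      Metric.closedBall (0 : EuclideanSpace ℝ (Fin 3)) 1) := by
  have hN := isRadialGauge_surfaceGauge
  rw [Ssurf_eq, hN.setOf_isBounded_connectedComponentIn_compl, hN.closure_setOf_lt_one]
  exact ⟨⟨hN.homeomorphSphere⟩, ⟨hN.homeomorphClosedBall⟩⟩
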